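/- Let X be a real normed space with dual X*, let f₁, …, f_n : X → ℝ ∪ {+∞} be proper convex functions, set f = max_k f_k, and for λ ∈ Δ_n write f_λ = Σ_k λ_k f_k. Then for every x ∈ X with f(x) ∈ ℝ and every ε ≥ 0: ∂_ε f(x) = ⋃_{λ∈Δ_n} ∂_{ε + f_λ(x) − f(x)} f_λ(x), where ∂_δ g(x) = {x* ∈ X* : g(y) ≥ g(x) + ⟨x*, y − x⟩ − δ for all y ∈ X} (empty if δ < 0 or x ∉ dom g). -/
import Mathlib

open Filter Topology

def IsConvexEFn {E : Type*} [AddCommGroup E] [Module ℝ E] (g : E → EReal) : Prop :=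
  Convex ℝ {p : E × ℝ | g p.1 ≤ (p.2 : EReal)}

/-- Scalar multiplication with the conventions `0·(+∞) = +∞` and `0·(−∞) = 0`. -/
noncomputable def smul0 (a : ℝ) (v : EReal) : EReal :=
  if a = 0 then (if v = ⊤ then ⊤ else 0) else (a : EReal) * v

/-- The `δ`-subdifferential of `g` at `x`: empty if `δ < 0` or `x ∉ dom g`. -/
def esubdiff {X : Type*} [NormedAddCommGroup X] [NormedSpace ℝ X]
    (g : X → EReal) (x : X) (δ : ℝ) : Set (X →L[ℝ] ℝ) :=
  {p | 0 ≤ δ ∧ g x ≠ ⊤ ∧ ∀ y, g x + ((p (y - x) : ℝ) : EReal) - (δ : EReal) ≤ g y}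

lemma smul0_real (a : ℝ) (v : EReal) (hb : v ≠ ⊥) (ht : v ≠ ⊤) :
    smul0 a v = ((a * v.toReal : ℝ) : EReal) := by
  unfold smul0
  rcases eq_or_ne a 0 with h | h
  · simp [h, ht]
  · rw [if_neg h, EReal.coe_mul, EReal.coe_toReal ht hb]

lemma smul0_top (a : ℝ) (ha : 0 ≤ a) : smul0 a ⊤ = ⊤ := by
  unfold smul0
  rcases eq_or_ne a 0 with h | h
  · simp [h]
  · rw [if_neg h, EReal.coe_mul_top_of_pos (lt_of_le_of_ne ha (Ne.symm h))]

lemma smul0_ne_bot (a : ℝ) (ha : 0 ≤ a) (v : EReal) (hb : v ≠ ⊥) : smul0 a v ≠ ⊥ := by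
  rcases eq_or_ne v ⊤ with rfl | ht
  · simp [smul0_top a ha]
  · rw [smul0_real a v hb ht]; exact EReal.coe_ne_bot _

lemma fsum_ne_bot {ι : Type*} (s : Finset ι) (w : ι → EReal) (h : ∀ k ∈ s, w k ≠ ⊥) :
    (∑ k ∈ s, w k) ≠ ⊥ := by
  classical
  induction s using Finset.cons_induction with
  | empty => simp
  | cons a s ha ih =>
    rw [Finset.sum_cons]
    intro hc
    rcases EReal.add_eq_bot_iff.1 hc with h1 | h1
    · exact h a (Finset.mem_cons_self _ _) h1
    · exact ih (fun k hk => h k (Finset.mem_cons_of_mem hk)) h1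

lemma sum_top {n : ℕ} (w : Fin n → EReal) (h : ∀ k, w k ≠ ⊥) (k₀ : Fin n) (ht : w k₀ = ⊤) :
    (∑ k, w k) = ⊤ := by
  classical
  rw [← Finset.add_sum_erase _ _ (Finset.mem_univ k₀), ht, EReal.top_add_of_ne_bot]
  exact fsum_ne_bot _ _ (fun k _ => h k)

lemma sum_coe {n : ℕ} (r : Fin n → ℝ) : (∑ k, ((r k : EReal))) = ((∑ k, r k : ℝ) : EReal) := by
  induction n with
  | zero => simp
  | succ m ih => rw [Fin.sum_univ_succ, Fin.sum_univ_succ, ih, EReal.coe_add]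

lemma sum_smul0_real {n : ℕ} (l : Fin n → ℝ) (v : Fin n → EReal)
    (hb : ∀ k, v k ≠ ⊥) (ht : ∀ k, v k ≠ ⊤) :
    (∑ k, smul0 (l k) (v k)) = ((∑ k, l k * (v k).toReal : ℝ) : EReal) := by
  rw [← sum_coe]
  exact Finset.sum_congr rfl fun k _ => smul0_real (l k) (v k) (hb k) (ht k)

lemma convex_ineq {E : Type*} [AddCommGroup E] [Module ℝ E] {g : E → EReal} (hg : IsConvexEFn g)
    {y₁ y₂ : E} {r₁ r₂ : ℝ} (h1 : g y₁ ≤ (r₁ : EReal)) (h2 : g y₂ ≤ (r₂ : EReal))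
    {t₁ t₂ : ℝ} (ht₁ : 0 ≤ t₁) (ht₂ : 0 ≤ t₂) (hts : t₁ + t₂ = 1) :
    g (t₁ • y₁ + t₂ • y₂) ≤ ((t₁ * r₁ + t₂ * r₂ : ℝ) : EReal) := by
  have := hg (show ((y₁, r₁) : E × ℝ) ∈ _ from h1) (show ((y₂, r₂) : E × ℝ) ∈ _ from h2) ht₁ ht₂ hts
  simpa [Prod.smul_mk, smul_eq_mul] using this

/-- `∂_ε f(x) = ⋃_{λ ∈ Δ_n} ∂_{ε + f_λ(x) − f(x)} f_λ(x)` for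
`f = max_k f_k`, `f_λ = Σ λ_k f_k`, with `f(x)` finite and `ε ≥ 0`. -/
theorem stmt9 {X : Type*} [NormedAddCommGroup X] [NormedSpace ℝ X]
    (n : ℕ) (hn : 0 < n) (f : Fin n → X → EReal)
    (hnb : ∀ k x, f k x ≠ ⊥) (hpr : ∀ k, ∃ x, f k x ≠ ⊤)
    (hconv : ∀ k, IsConvexEFn (f k))
    (x : X) (hx₁ : (⨆ k, f k x) ≠ ⊤) (hx₂ : (⨆ k, f k x) ≠ ⊥)
    (ε : ℝ) (hε : 0 ≤ ε) :
    esubdiff (fun z => ⨆ k, f k z) x ε =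
      ⋃ l ∈ {l : Fin n → ℝ | (∀ k, 0 ≤ l k) ∧ ∑ k, l k = 1},
        esubdiff (fun z => ∑ k, smul0 (l k) (f k z)) x
          (ε + ((∑ k, smul0 (l k) (f k x)).toReal - (⨆ k, f k x).toReal)) := by
  classical
  haveI : Nonempty (Fin n) := ⟨⟨0, hn⟩⟩
  set a : ℝ := (⨆ k, f k x).toReal with ha
  have hFx : (⨆ k, f k x) = (a : EReal) := (EReal.coe_toReal hx₁ hx₂).symm
  have hfxt : ∀ k, f k x ≠ ⊤ := fun k => ne_top_of_le_ne_top hx₁ (le_iSup (fun k => f k x) k)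
  ext p
  simp only [esubdiff, Set.mem_iUnion, Set.mem_setOf_eq]
  constructor
  · -- hard direction
    rintro ⟨-, -, hsub⟩
    set A : X → ℝ := fun y => a + p (y - x) - ε with hA
    have hsub' : ∀ y, ((A y : ℝ) : EReal) ≤ ⨆ k, f k y := by
      intro y
      have := hsub y
      rwa [hFx, ← EReal.coe_add, ← EReal.coe_sub] at this
    -- the open convex set D
    set D : Set (Fin n → ℝ) := {v | ∃ y, ∀ k, f k y < ((v k + A y : ℝ) : EReal)} with hD
    have hAaff : ∀ (y₁ y₂ : X) (t₁ t₂ : ℝ), t₁ + t₂ = 1 →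
        A (t₁ • y₁ + t₂ • y₂) = t₁ * A y₁ + t₂ * A y₂ := by
      intro y₁ y₂ t₁ t₂ hts
      have hxx : (t₁ • y₁ + t₂ • y₂) - x = t₁ • (y₁ - x) + t₂ • (y₂ - x) := by
        have hx1 : x = t₁ • x + t₂ • x := by rw [← add_smul, hts, one_smul]
        conv_lhs => rw [hx1]
        rw [smul_sub, smul_sub]
        abel
      simp only [hA, hxx, map_add, map_smul, smul_eq_mul]
      linear_combination (ε - a) * hts
    have hDconv : Convex ℝ D := by
      rintro v hv w hw t₁ t₂ ht₁ ht₂ hts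
      obtain ⟨y₁, hy₁⟩ := hv
      obtain ⟨y₂, hy₂⟩ := hw
      refine ⟨t₁ • y₁ + t₂ • y₂, fun k => ?_⟩
      have hk1 := hy₁ k
      have hk2 := hy₂ k
      have hr1t : f k y₁ ≠ ⊤ := ne_top_of_le_ne_top (EReal.coe_ne_top _) hk1.le
      have hr2t : f k y₂ ≠ ⊤ := ne_top_of_le_ne_top (EReal.coe_ne_top _) hk2.le
      set r₁ := (f k y₁).toReal
      set r₂ := (f k y₂).toReal
      have hc1 : f k y₁ ≤ (r₁ : EReal) := (EReal.coe_toReal hr1t (hnb k y₁)).symm.le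
      have hc2 : f k y₂ ≤ (r₂ : EReal) := (EReal.coe_toReal hr2t (hnb k y₂)).symm.le
      have hlt1 : r₁ < v k + A y₁ := by
        have := hk1; rw [← EReal.coe_toReal hr1t (hnb k y₁)] at this
        exact_mod_cast this
      have hlt2 : r₂ < w k + A y₂ := by
        have := hk2; rw [← EReal.coe_toReal hr2t (hnb k y₂)] at this
        exact_mod_cast this
      have hcomb := convex_ineq (hconv k) hc1 hc2 ht₁ ht₂ hts
      refine lt_of_le_of_lt hcomb ?_
      rw [EReal.coe_lt_coe_iff]
      have hAval : A (t₁ • y₁ + t₂ • y₂) = t₁ * A y₁ + t₂ * A y₂ := hAaff _ _ _ _ hts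
      have hpt : (t₁ • v + t₂ • w) k = t₁ * v k + t₂ * w k := by
        simp [Pi.smul_apply, smul_eq_mul]
      rw [hpt, hAval]
      rcases eq_or_lt_of_le ht₁ with h0 | h0
      · nlinarith
      · nlinarith
    have hDopen : IsOpen D := by
      have hDeq : D = ⋃ y : X, ⋂ k, {v : Fin n → ℝ | f k y < ((v k + A y : ℝ) : EReal)} := by
        ext v
        simp [hD, Set.mem_iInter]
      rw [hDeq]
      refine isOpen_iUnion fun y => isOpen_iInter_of_finite fun k => ?_
      rcases eq_or_ne (f k y) ⊤ with h | h
      · convert isOpen_empty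
        ext v
        simp [h]
      · have heq : {v : Fin n → ℝ | f k y < ((v k + A y : ℝ) : EReal)} =
            (fun v : Fin n → ℝ => v k) ⁻¹' Set.Ioi ((f k y).toReal - A y) := by
          obtain ⟨r, hr⟩ : ∃ r : ℝ, f k y = (r : EReal) :=
            ⟨(f k y).toReal, (EReal.coe_toReal h (hnb k y)).symm⟩
          ext v
          simp only [Set.mem_setOf_eq, Set.mem_preimage, Set.mem_Ioi, hr,
            EReal.coe_lt_coe_iff, EReal.toReal_coe]
          constructor <;> intro <;> linarith
        rw [heq]
        exact (continuous_apply k).isOpen_preimage _ isOpen_Ioi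
    -- the negative orthant
    set O : Set (Fin n → ℝ) := {v | ∀ k, v k ≤ 0} with hO
    have hOconv : Convex ℝ O := by
      rintro v hv w hw t₁ t₂ ht₁ ht₂ hts k
      have h1 := hv k
      have h2 := hw k
      have : (t₁ • v + t₂ • w) k = t₁ * v k + t₂ * w k := by
        simp [Pi.smul_apply, smul_eq_mul]
      rw [this]
      nlinarith
    have hdisj : Disjoint D O := by
      rw [Set.disjoint_left]
      rintro v ⟨y, hy⟩ hvO
      -- each f k y < A y, hence sup < A y, contradicting hsub'
      have hlt : ∀ k, f k y < ((A y : ℝ) : EReal) := by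
        intro k
        refine lt_of_lt_of_le (hy k) ?_
        exact EReal.coe_le_coe_iff.2 (by linarith [hvO k])
      have hfyt : ∀ k, f k y ≠ ⊤ := fun k => (hlt k).ne_top
      set c : ℝ := Finset.univ.sup' Finset.univ_nonempty (fun k => (f k y).toReal) with hc
      have hcA : c < A y := by
        rw [hc, Finset.sup'_lt_iff]
        intro k _
        have := hlt k
        rw [← EReal.coe_toReal (hfyt k) (hnb k y)] at this
        exact_mod_cast this
      have hsupc : (⨆ k, f k y) ≤ (c : EReal) := by
        refine iSup_le fun k => ?_
        rw [← EReal.coe_toReal (hfyt k) (hnb k y)]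
        exact EReal.coe_le_coe_iff.2
          (Finset.le_sup' (fun k => (f k y).toReal) (Finset.mem_univ k))
      have := lt_of_le_of_lt (le_trans (hsub' y) hsupc) (EReal.coe_lt_coe_iff.2 hcA)
      exact absurd (hsub' y) (not_le_of_gt (lt_of_le_of_lt hsupc (EReal.coe_lt_coe_iff.2 hcA)))
    obtain ⟨q, u, hq1, hq2⟩ := geometric_hahn_banach_open hDconv hDopen hOconv hdisj
    have hu0 : u ≤ 0 := by
      have := hq2 0 (fun k => le_refl 0)
      simpa using this
    set e : Fin n → (Fin n → ℝ) := fun k => Pi.single k 1 with he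
    set μ : Fin n → ℝ := fun k => -q (e k) with hμ
    have hqv : ∀ v : Fin n → ℝ, q v = -∑ k, μ k * v k := by
      intro v
      have hvsum : v = ∑ k, Pi.single k (v k) := (Finset.univ_sum_single v).symm
      have h1 : q v = ∑ k, q (Pi.single k (v k)) := by
        conv_lhs => rw [hvsum]
        rw [map_sum]
      rw [h1, ← Finset.sum_neg_distrib]
      refine Finset.sum_congr rfl fun k _ => ?_
      have h2 : Pi.single k (v k) = (v k) • e k := by
        funext j
        simp [he, Pi.single_apply, Pi.smul_apply, smul_eq_mul, mul_ite]
      rw [h2, map_smul, smul_eq_mul, hμ]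
      ring
    have hμ0 : ∀ k, 0 ≤ μ k := by
      intro k
      by_contra hneg
      push_neg at hneg
      have hs : 0 < q (e k) := by
        have h3 : q (e k) = -μ k := by rw [hμ]; ring
        rw [h3]; linarith
      set t : ℝ := (1 - u) / q (e k) with htdef
      have ht : 0 < t := div_pos (by linarith) hs
      have hbO : (-t) • e k ∈ O := by
        intro j
        have hj : ((-t) • e k) j = -t * (if j = k then 1 else 0) := by
          simp [he, Pi.single_apply]
        rw [hj]
        split_ifs <;> nlinarith
      have h4 : q ((-t) • e k) = -t * q (e k) := by rw [map_smul, smul_eq_mul]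
      have h5 := hq2 _ hbO
      rw [h4, htdef, neg_mul, div_mul_cancel₀ _ (ne_of_gt hs)] at h5
      linarith
    -- D is nonempty, every element of D has positive pairing with μ
    have hpos : ∀ v ∈ D, 0 < ∑ k, μ k * v k := by
      intro v hv
      have := hq1 v hv
      rw [hqv v] at this
      linarith
    have hv₀ : (fun k => (f k x).toReal - A x + 1) ∈ D := by
      refine ⟨x, fun k => ?_⟩
      obtain ⟨r, hr⟩ : ∃ r : ℝ, f k x = (r : EReal) :=
        ⟨(f k x).toReal, (EReal.coe_toReal (hfxt k) (hnb k x)).symm⟩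
      simp only [hr, EReal.toReal_coe, EReal.coe_lt_coe_iff]
      linarith
    set S : ℝ := ∑ k, μ k with hS
    have hSpos : 0 < S := by
      rcases lt_or_eq_of_le (Finset.sum_nonneg (fun k _ => hμ0 k)) with h | h
      · exact h
      · exfalso
        have hall : ∀ k ∈ Finset.univ, μ k = 0 := by
          intro k _
          have := (Finset.sum_eq_zero_iff_of_nonneg (fun k _ => hμ0 k)).1 h.symm
          exact this k (Finset.mem_univ k)
        have := hpos _ hv₀
        rw [Finset.sum_eq_zero (fun k _ => by rw [hall k (Finset.mem_univ k)]; ring)] at this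
        exact lt_irrefl 0 this
    set l : Fin n → ℝ := fun k => μ k / S with hl
    have hl0 : ∀ k, 0 ≤ l k := fun k => div_nonneg (hμ0 k) hSpos.le
    have hl1 : ∑ k, l k = 1 := by
      rw [hl]
      rw [← Finset.sum_div, ← hS, div_self (ne_of_gt hSpos)]
    -- key inequality
    have hkey : ∀ y, (∀ k, f k y ≠ ⊤) → A y ≤ ∑ k, l k * (f k y).toReal := by
      intro y hyt
      have hδ : ∀ δ : ℝ, 0 < δ → S * A y < (∑ k, μ k * (f k y).toReal) + S * δ := by
        intro δ hδpos
        have hvD : (fun k => (f k y).toReal - A y + δ) ∈ D := by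
          refine ⟨y, fun k => ?_⟩
          obtain ⟨r, hr⟩ : ∃ r : ℝ, f k y = (r : EReal) :=
            ⟨(f k y).toReal, (EReal.coe_toReal (hyt k) (hnb k y)).symm⟩
          simp only [hr, EReal.toReal_coe, EReal.coe_lt_coe_iff]
          linarith
        have := hpos _ hvD
        have hexp : ∑ k, μ k * ((f k y).toReal - A y + δ) =
            (∑ k, μ k * (f k y).toReal) - S * A y + S * δ := by
          rw [hS, Finset.sum_mul, Finset.sum_mul, ← Finset.sum_sub_distrib, ← Finset.sum_add_distrib]
          refine Finset.sum_congr rfl fun k _ => by ring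
        rw [hexp] at this
        linarith
      have hSA : S * A y ≤ ∑ k, μ k * (f k y).toReal := by
        by_contra hcon
        push_neg at hcon
        set δ := (S * A y - ∑ k, μ k * (f k y).toReal) / (2 * S) with hδdef
        have hδpos : 0 < δ := div_pos (by linarith) (by linarith)
        have := hδ δ hδpos
        rw [hδdef] at this
        have h2S : S * ((S * A y - ∑ k, μ k * (f k y).toReal) / (2 * S)) =
            (S * A y - ∑ k, μ k * (f k y).toReal) / 2 := by
          field_simp
        rw [h2S] at this
        nlinarith [this, hcon]
      have hls : ∑ k, l k * (f k y).toReal = (∑ k, μ k * (f k y).toReal) / S := by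
        rw [eq_div_iff (ne_of_gt hSpos), Finset.sum_mul]
        refine Finset.sum_congr rfl fun k _ => ?_
        simp only [hl]
        field_simp
      rw [hls, le_div_iff₀ hSpos]
      linarith [mul_comm (A y) S]
    -- assemble membership
    have hAx : (∑ k, smul0 (l k) (f k x)) = ((∑ k, l k * (f k x).toReal : ℝ) : EReal) :=
      sum_smul0_real l _ (fun k => hnb k x) hfxt
    have hAx0 : A x = a - ε := by simp [hA]
    have hkx : a - ε ≤ ∑ k, l k * (f k x).toReal := by
      have := hkey x hfxt
      rwa [hAx0] at this
    refine ⟨l, ⟨hl0, hl1⟩, ?_, ?_, ?_⟩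
    · rw [hAx, EReal.toReal_coe]
      linarith
    · rw [hAx]
      exact EReal.coe_ne_top _
    · intro y
      rw [hAx, EReal.toReal_coe, ← EReal.coe_add, ← EReal.coe_sub]
      by_cases hyt : ∀ k, f k y ≠ ⊤
      · rw [sum_smul0_real l _ (fun k => hnb k y) hyt]
        rw [EReal.coe_le_coe_iff]
        have hk := hkey y hyt
        simp only [hA] at hk
        linarith
      · push_neg at hyt
        obtain ⟨k₀, hk₀⟩ := hyt
        rw [sum_top _ (fun k => smul0_ne_bot _ (hl0 k) _ (hnb k y)) k₀
          (by rw [hk₀]; exact smul0_top _ (hl0 k₀))]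
        exact le_top
  · -- easy direction
    rintro ⟨l, ⟨hl0, hl1⟩, hε', hlx, hsub⟩
    have hAx : (∑ k, smul0 (l k) (f k x)) = ((∑ k, l k * (f k x).toReal : ℝ) : EReal) :=
      sum_smul0_real l _ (fun k => hnb k x) hfxt
    refine ⟨hε, hx₁, fun y => ?_⟩
    rw [hFx, ← EReal.coe_add, ← EReal.coe_sub]
    have hs := hsub y
    rw [hAx, EReal.toReal_coe, ← EReal.coe_add, ← EReal.coe_sub] at hs
    have h1 : (a + p (y - x) - ε : ℝ) =
        (∑ k, l k * (f k x).toReal) + p (y - x) -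
          (ε + ((∑ k, l k * (f k x).toReal) - a)) := by ring
    rw [h1]
    refine hs.trans ?_
    by_cases hyt : ∀ k, f k y ≠ ⊤
    · rw [sum_smul0_real l _ (fun k => hnb k y) hyt]
      set c : ℝ := Finset.univ.sup' Finset.univ_nonempty (fun k => (f k y).toReal) with hc
      have hb : ∀ k, (f k y).toReal ≤ c :=
        fun k => Finset.le_sup' (fun k => (f k y).toReal) (Finset.mem_univ k)
      have hsum : ∑ k, l k * (f k y).toReal ≤ c := by
        calc ∑ k, l k * (f k y).toReal ≤ ∑ k, l k * c :=
              Finset.sum_le_sum fun k _ => mul_le_mul_of_nonneg_left (hb k) (hl0 k)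
          _ = c := by rw [← Finset.sum_mul, hl1, one_mul]
      obtain ⟨k₁, -, hk₁⟩ := Finset.exists_mem_eq_sup' (Finset.univ_nonempty (α := Fin n))
        (fun k => (f k y).toReal)
      have hcle : (c : EReal) ≤ ⨆ k, f k y := by
        rw [hc, hk₁, EReal.coe_toReal (hyt k₁) (hnb k₁ y)]
        exact le_iSup (fun k => f k y) k₁
      exact le_trans (EReal.coe_le_coe_iff.2 hsum) hcle
    · push_neg at hyt
      obtain ⟨k₀, hk₀⟩ := hyt
      have htop : (⨆ k, f k y) = ⊤ :=
        top_le_iff.1 (by rw [← hk₀]; exact le_iSup (fun k => f k y) k₀)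
      rw [htop]
      exact le_top
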